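/- There exists a PPT measurement achieving success probability exactly 7/8 on the four states ψ₀⊗ψ₀, ψ₁⊗ψ₃, ψ₂⊗ψ₃, ψ₃⊗ψ₃. Explicitly, with Q = (1/4)·I⊗(ψ₁+ψ₂), R = (7/8)ψ₀+(1/8)ψ₃, S = (1/8)ψ₀+(7/8)ψ₃, the operators P₁ = Q + ((2/3)ψ₀+(1/3)I)⊗R, P₂ = Q + ((1/3)ψ₀+ψ₁)⊗S + (1/3)(ψ₂+ψ₃)⊗R, P₃ = Q + ((1/3)ψ₀+ψ₂)⊗S + (1/3)(ψ₁+ψ₃)⊗R, P₄ = Q + ((1/3)ψ₀+ψ₃)⊗S + (1/3)(ψ₁+ψ₂)⊗R satisfy: each Pⱼ is PPT, P₁+P₂+P₃+P₄ = I₁₆, and ⟨Pⱼ, ρⱼ⟩ = 7/8 for each j. -/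

import Mathlib

open Matrix

noncomputable def pauli : Fin 4 → Matrix (Fin 2) (Fin 2) ℂ
  | 0 => 1
  | 1 => !![0, 1; 1, 0]
  | 2 => !![0, -Complex.I; Complex.I, 0]
  | 3 => !![1, 0; 0, -1]

/-- Density operator of the Bell state `|ψᵢ⟩ = (1 ⊗ σᵢ)|ψ₀⟩`,
`|ψ₀⟩ = (|00⟩+|11⟩)/√2`, as a matrix on `ℂ² ⊗ ℂ²`. -/
noncomputable def bell (i : Fin 4) :
    Matrix (Fin 2 × Fin 2) (Fin 2 × Fin 2) ℂ :=
  fun p q => (1 / 2 : ℂ) * pauli i p.2 p.1 * (starRingEnd ℂ) (pauli i q.2 q.1)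

/-- Partial transpose on the first tensor factor. -/
def PT {d : ℕ} (X : Matrix (Fin d × Fin d) (Fin d × Fin d) ℂ) :
    Matrix (Fin d × Fin d) (Fin d × Fin d) ℂ :=
  fun p q => X (q.1, p.2) (p.1, q.2)

open Kronecker
open scoped ComplexOrder

/-- Partial transpose on both of Alice's qubits, acting factorwise on
`(ℂ²⊗ℂ²) ⊗ (ℂ²⊗ℂ²)`. -/
def PT2 (X : Matrix ((Fin 2 × Fin 2) × (Fin 2 × Fin 2))
    ((Fin 2 × Fin 2) × (Fin 2 × Fin 2)) ℂ) :
    Matrix ((Fin 2 × Fin 2) × (Fin 2 × Fin 2)) ((Fin 2 × Fin 2) × (Fin 2 × Fin 2)) ℂ :=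
  fun p q => X ((q.1.1, p.1.2), (q.2.1, p.2.2)) ((p.1.1, q.1.2), (p.2.1, q.2.2))

/-- The four states of Yu–Duan–Ying's example. -/
noncomputable def ydy : Fin 4 → Matrix ((Fin 2 × Fin 2) × (Fin 2 × Fin 2))
    ((Fin 2 × Fin 2) × (Fin 2 × Fin 2)) ℂ
  | 0 => bell 0 ⊗ₖ bell 0
  | 1 => bell 1 ⊗ₖ bell 3
  | 2 => bell 2 ⊗ₖ bell 3
  | 3 => bell 3 ⊗ₖ bell 3

noncomputable def Qop : Matrix ((Fin 2 × Fin 2) × (Fin 2 × Fin 2))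
    ((Fin 2 × Fin 2) × (Fin 2 × Fin 2)) ℂ :=
  (1 / 4 : ℂ) • ((1 : Matrix (Fin 2 × Fin 2) (Fin 2 × Fin 2) ℂ) ⊗ₖ (bell 1 + bell 2))

noncomputable def Rop : Matrix (Fin 2 × Fin 2) (Fin 2 × Fin 2) ℂ :=
  (7 / 8 : ℂ) • bell 0 + (1 / 8 : ℂ) • bell 3

noncomputable def Sop : Matrix (Fin 2 × Fin 2) (Fin 2 × Fin 2) ℂ :=
  (1 / 8 : ℂ) • bell 0 + (7 / 8 : ℂ) • bell 3

noncomputable def Pop : Fin 4 → Matrix ((Fin 2 × Fin 2) × (Fin 2 × Fin 2))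
    ((Fin 2 × Fin 2) × (Fin 2 × Fin 2)) ℂ
  | 0 => Qop + ((2 / 3 : ℂ) • bell 0 + (1 / 3 : ℂ) • 1) ⊗ₖ Rop
  | 1 => Qop + ((1 / 3 : ℂ) • bell 0 + bell 1) ⊗ₖ Sop
        + (1 / 3 : ℂ) • ((bell 2 + bell 3) ⊗ₖ Rop)
  | 2 => Qop + ((1 / 3 : ℂ) • bell 0 + bell 2) ⊗ₖ Sop
        + (1 / 3 : ℂ) • ((bell 1 + bell 3) ⊗ₖ Rop)
  | 3 => Qop + ((1 / 3 : ℂ) • bell 0 + bell 3) ⊗ₖ Sop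
        + (1 / 3 : ℂ) • ((bell 1 + bell 2) ⊗ₖ Rop)

/-! Every operator involved is Bell-diagonal, a real combination `∑ cᵢₖ • ψᵢ ⊗ ψₖ` of the
sixteen mutually orthogonal projections `ψᵢ ⊗ ψₖ`. Such an operator is positive once its
coefficients are, and its inner product with `ψₐ ⊗ ψ_b` is `c_ab`. Since
`PT ψᵢ = ½·1 − ψ_{i+2}`, the partial transpose maps it to the Bell-diagonal operator with
coefficients `Mᵀ c M`, where `M = ½J − (shift by 2)`. All four claims thus become arithmetic
on the coefficient tables of the `Pⱼ`. -/

theorem Matrix.sum_kronecker {ι l m n p R : Type*} [CommSemiring R] (s : Finset ι)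
    (A : ι → Matrix l m R) (B : Matrix n p R) :
    (∑ i ∈ s, A i) ⊗ₖ B = ∑ i ∈ s, A i ⊗ₖ B :=
  map_sum ((kroneckerBilinear (R := R) (α := R)).flip B) A s

theorem Matrix.kronecker_sum {ι l m n p R : Type*} [CommSemiring R] (s : Finset ι)
    (A : Matrix l m R) (B : ι → Matrix n p R) :
    A ⊗ₖ (∑ i ∈ s, B i) = ∑ i ∈ s, A ⊗ₖ B i :=
  map_sum (kroneckerBilinear (R := R) (α := R) A) B s

theorem bell_posSemidef (i : Fin 4) : (bell i).PosSemidef := by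
  have h : bell i = (1 / 2 : ℂ) • vecMulVec (fun q => pauli i q.2 q.1)
      (star fun q => pauli i q.2 q.1) := by
    ext p q
    simp [bell, vecMulVec_apply, mul_assoc]
  rw [h]
  exact (posSemidef_vecMulVec_self_star _).smul (by positivity)

theorem sum_bell : ∑ i, bell i = 1 := by
  ext ⟨a, b⟩ ⟨c, d⟩
  fin_cases a <;> fin_cases b <;> fin_cases c <;> fin_cases d <;>
    simp [Fin.sum_univ_four, bell, pauli, mul_assoc] <;> norm_num

theorem trace_bell_mul_bell (i k : Fin 4) :
    trace (bell i * bell k) = if i = k then 1 else 0 := by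
  fin_cases i <;> fin_cases k <;>
    norm_num [trace, mul_apply, bell, pauli, Fintype.sum_prod_type, mul_mul_mul_comm _ Complex.I]

theorem PT_bell (i : Fin 4) : PT (bell i) = (1 / 2 : ℂ) • 1 - bell (i + 2) := by
  ext ⟨a, b⟩ ⟨c, d⟩
  fin_cases i <;> fin_cases a <;> fin_cases b <;> fin_cases c <;> fin_cases d <;>
    simp [PT, bell, pauli, mul_assoc]

noncomputable def ptBell : Matrix (Fin 4) (Fin 4) ℝ :=
  of fun i j => 1 / 2 - if j = i + 2 then 1 else 0

theorem PT_bell_eq_sum (i : Fin 4) : PT (bell i) = ∑ j, (ptBell i j : ℂ) • bell j := by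
  simp only [PT_bell, ptBell, of_apply, Complex.ofReal_sub, sub_smul, Finset.sum_sub_distrib,
    ← Finset.smul_sum, sum_bell]
  simp

theorem PT2_sum {ι : Type*} (s : Finset ι) (X : ι → Matrix ((Fin 2 × Fin 2) × (Fin 2 × Fin 2))
    ((Fin 2 × Fin 2) × (Fin 2 × Fin 2)) ℂ) :
    PT2 (∑ i ∈ s, X i) = ∑ i ∈ s, PT2 (X i) := by
  ext p q
  simp [PT2, Matrix.sum_apply]

theorem PT2_smul (c : ℂ) (X : Matrix ((Fin 2 × Fin 2) × (Fin 2 × Fin 2))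
    ((Fin 2 × Fin 2) × (Fin 2 × Fin 2)) ℂ) : PT2 (c • X) = c • PT2 X := rfl

theorem PT2_kronecker (A B : Matrix (Fin 2 × Fin 2) (Fin 2 × Fin 2) ℂ) :
    PT2 (A ⊗ₖ B) = PT A ⊗ₖ PT B := rfl

noncomputable def bellDiag (c : Matrix (Fin 4) (Fin 4) ℝ) :
    Matrix ((Fin 2 × Fin 2) × (Fin 2 × Fin 2)) ((Fin 2 × Fin 2) × (Fin 2 × Fin 2)) ℂ :=
  ∑ i, ∑ k, (c i k : ℂ) • (bell i ⊗ₖ bell k)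

theorem bellDiag_smul (r : ℝ) (c : Matrix (Fin 4) (Fin 4) ℝ) :
    bellDiag (r • c) = (r : ℂ) • bellDiag c := by
  simp only [bellDiag, Matrix.smul_apply, smul_eq_mul, Complex.ofReal_mul, Finset.smul_sum,
    smul_smul]

theorem bellDiag_sum {ι : Type*} (s : Finset ι) (c : ι → Matrix (Fin 4) (Fin 4) ℝ) :
    bellDiag (∑ j ∈ s, c j) = ∑ j ∈ s, bellDiag (c j) := by
  simp only [bellDiag, Matrix.sum_apply, Complex.ofReal_sum, Finset.sum_smul]
  rw [Finset.sum_comm (s := s)]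
  exact Finset.sum_congr rfl fun i _ => Finset.sum_comm

theorem bellDiag_of_one : bellDiag (of fun _ _ => 1) = 1 := by
  simp only [bellDiag, of_apply, Complex.ofReal_one, one_smul, ← kronecker_sum, ← sum_kronecker,
    sum_bell, one_kronecker_one]

theorem bellDiag_posSemidef {c : Matrix (Fin 4) (Fin 4) ℝ} (hc : ∀ i k, 0 ≤ c i k) :
    (bellDiag c).PosSemidef :=
  posSemidef_sum _ fun i _ => posSemidef_sum _ fun k _ =>
    ((bell_posSemidef i).kronecker (bell_posSemidef k)).smul (Complex.zero_le_real.mpr (hc i k))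

theorem trace_bellDiag_mul_bell_kronecker_bell (c : Matrix (Fin 4) (Fin 4) ℝ) (a b : Fin 4) :
    trace (bellDiag c * (bell a ⊗ₖ bell b)) = c a b := by
  simp [bellDiag, Finset.sum_mul, ← mul_kronecker_mul, trace_sum, trace_kronecker,
    trace_bell_mul_bell]

theorem PT2_bell_kronecker_bell (i k : Fin 4) :
    PT2 (bell i ⊗ₖ bell k) = bellDiag (vecMulVec (ptBell i) (ptBell k)) := by
  rw [PT2_kronecker, PT_bell_eq_sum, PT_bell_eq_sum, bellDiag]
  simp only [sum_kronecker, kronecker_sum, smul_kronecker, kronecker_smul, Finset.smul_sum,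
    smul_smul, vecMulVec_apply, Complex.ofReal_mul]
  rw [Finset.sum_comm]
  simp only [mul_comm]

theorem ptBell_transpose_mul_mul_eq_sum (c : Matrix (Fin 4) (Fin 4) ℝ) :
    ptBellᵀ * c * ptBell = ∑ i, ∑ k, c i k • vecMulVec (ptBell i) (ptBell k) := by
  ext j l
  simp only [mul_apply, transpose_apply, Matrix.sum_apply, Matrix.smul_apply, vecMulVec_apply,
    smul_eq_mul, Finset.sum_mul]
  rw [Finset.sum_comm]
  refine Finset.sum_congr rfl fun i _ => Finset.sum_congr rfl fun k _ => ?_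
  ring

theorem PT2_bellDiag (c : Matrix (Fin 4) (Fin 4) ℝ) :
    PT2 (bellDiag c) = bellDiag (ptBellᵀ * c * ptBell) := by
  simp only [ptBell_transpose_mul_mul_eq_sum, bellDiag_sum, bellDiag_smul,
    ← PT2_bell_kronecker_bell]
  simp only [bellDiag, PT2_sum, PT2_smul]

theorem ptBell_transpose_mul_mul_apply (c : Matrix (Fin 4) (Fin 4) ℝ) (a b : Fin 4) :
    (ptBellᵀ * c * ptBell) a b = (∑ i, ∑ k, c i k) / 4 - (∑ k, c (a + 2) k) / 2
      - (∑ i, c i (b + 2)) / 2 + c (a + 2) (b + 2) := by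
  fin_cases a <;> fin_cases b <;> simp [mul_apply, Fin.sum_univ_four, ptBell] <;> ring

noncomputable def popCoef : Fin 4 → Matrix (Fin 4) (Fin 4) ℝ
  | 0 => !![7/8, 1/4, 1/4, 1/8; 7/24, 1/4, 1/4, 1/24; 7/24, 1/4, 1/4, 1/24; 7/24, 1/4, 1/4, 1/24]
  | 1 => !![1/24, 1/4, 1/4, 7/24; 1/8, 1/4, 1/4, 7/8; 7/24, 1/4, 1/4, 1/24; 7/24, 1/4, 1/4, 1/24]
  | 2 => !![1/24, 1/4, 1/4, 7/24; 7/24, 1/4, 1/4, 1/24; 1/8, 1/4, 1/4, 7/8; 7/24, 1/4, 1/4, 1/24]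
  | 3 => !![1/24, 1/4, 1/4, 7/24; 7/24, 1/4, 1/4, 1/24; 7/24, 1/4, 1/4, 1/24; 1/8, 1/4, 1/4, 7/8]

theorem Pop_eq_bellDiag (j : Fin 4) : Pop j = bellDiag (popCoef j) := by
  have h1 : (1 : Matrix (Fin 2 × Fin 2) (Fin 2 × Fin 2) ℂ) = bell 0 + bell 1 + bell 2 + bell 3 := by
    rw [← sum_bell, Fin.sum_univ_four]
  fin_cases j <;>
  · simp only [Pop, Qop, Rop, Sop, h1, add_kronecker, kronecker_add, smul_kronecker,
      kronecker_smul, smul_add, smul_smul]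
    simp [bellDiag, popCoef, Fin.sum_univ_four]
    module

theorem popCoef_nonneg (j a b : Fin 4) : 0 ≤ popCoef j a b := by
  fin_cases j <;> fin_cases a <;> fin_cases b <;> norm_num [popCoef]

theorem ptBell_transpose_mul_popCoef_mul_nonneg (j a b : Fin 4) :
    0 ≤ (ptBellᵀ * popCoef j * ptBell) a b := by
  rw [ptBell_transpose_mul_mul_apply]
  fin_cases j <;> fin_cases a <;> fin_cases b <;> simp [Fin.sum_univ_four, popCoef] <;> norm_num

theorem sum_popCoef : ∑ j, popCoef j = of fun _ _ => 1 := by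
  ext a b
  fin_cases a <;> fin_cases b <;> norm_num [Fin.sum_univ_four, popCoef]

/-- The explicit operators `P₁,…,P₄` form a PPT measurement that distinguishes
the Yu–Duan–Ying states with success probability exactly `7/8`. -/
theorem ydy_optimal_ppt_measurement :
    (∀ j : Fin 4, (Pop j).PosSemidef) ∧
    (∀ j : Fin 4, (PT2 (Pop j)).PosSemidef) ∧
    (∑ j, Pop j = 1) ∧
    (∀ j : Fin 4, Matrix.trace ((Pop j)ᴴ * ydy j) = 7 / 8) := by
  have hpsd (j : Fin 4) : (Pop j).PosSemidef :=
    Pop_eq_bellDiag j ▸ bellDiag_posSemidef (popCoef_nonneg j)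
  refine ⟨hpsd, fun j => ?_, ?_, fun j => ?_⟩
  · rw [Pop_eq_bellDiag, PT2_bellDiag]
    exact bellDiag_posSemidef (ptBell_transpose_mul_popCoef_mul_nonneg j)
  · simp only [Pop_eq_bellDiag, ← bellDiag_sum, sum_popCoef, bellDiag_of_one]
  · rw [(hpsd j).isHermitian.eq, Pop_eq_bellDiag]
    fin_cases j <;> simp [ydy, trace_bellDiag_mul_bell_kronecker_bell, popCoef]
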